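/- Let v = (v_1, …, v_n) be a finite sequence of nonnegative reals and let 1 ≤ i ≤ n−1 be an index with v_i > v_{i+1}. Let v' be the sequence obtained from v by swapping the entries at positions i and i+1. Then for every threshold t ≥ 0, pick(v', t) ≤ pick(v, t); that is, swapping an adjacent inverted pair never increases the value selected by the threshold rule. -/

import Mathlib

open MeasureTheory ProbabilityTheory

/-- `pick v t` returns `v i` for the least index `i` with `v i ≥ t`, and `0` if no
such index exists. -/
noncomputable def pick {n : ℕ} (v : Fin n → ℝ) (t : ℝ) : ℝ :=
  if h : (Finset.univ.filter (fun i => t ≤ v i)).Nonempty then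
    v ((Finset.univ.filter (fun i => t ≤ v i)).min' h)
  else 0

/-- The realized maximum `M(X)(ω) = max_i X_i(ω)` of an instance. -/
noncomputable def instMax {Ω : Type*} {n : ℕ} (X : Fin n → Ω → ℝ) (ω : Ω) : ℝ :=
  ⨆ i, X i ω

/-- `OPT(X) = E[max_i X_i]`. -/
noncomputable def OPT {Ω : Type*} {m : MeasurableSpace Ω} (μ : Measure Ω) {n : ℕ}
    (X : Fin n → Ω → ℝ) : ℝ :=
  ∫ ω, instMax X ω ∂μ

/-- `TAL(X, τ) = E[pick((X_1,…,X_n), τ)]`: the expected value of the threshold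
algorithm with threshold `τ`. -/
noncomputable def TAL {Ω : Type*} {m : MeasurableSpace Ω} (μ : Measure Ω) {n : ℕ}
    (X : Fin n → Ω → ℝ) (τ : ℝ) : ℝ :=
  ∫ ω, pick (fun i => X i ω) τ ∂μ

/-- `TAL_α(X, τ) = E[pick((X_1,…,X_n), max(τ, α·M))]`: the expected value of the
prediction-augmented threshold algorithm with base threshold `τ` and prediction
quality `α`. -/
noncomputable def TALpred {Ω : Type*} {m : MeasurableSpace Ω} (μ : Measure Ω) (α : ℝ)
    {n : ℕ} (X : Fin n → Ω → ℝ) (τ : ℝ) : ℝ :=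
  ∫ ω, pick (fun i => X i ω) (max τ (α * instMax X ω)) ∂μ

/-- The SC-threshold `η(I) = sup{τ ≥ 0 : TAL(I, τ) ≥ τ}`. -/
noncomputable def SCthreshold {Ω : Type*} {m : MeasurableSpace Ω} (μ : Measure Ω)
    {n : ℕ} (X : Fin n → Ω → ℝ) : ℝ :=
  sSup {τ : ℝ | 0 ≤ τ ∧ τ ≤ TAL μ X τ}

/-! Let `a` be the first index with `t ≤ v a`. If `a` lies before or after the adjacent inverted
pair `p`, `q`, the swap does not change `pick`. If `a = p`, the swap can only lower the picked
value: it becomes `v q` if that still reaches `t`, and otherwise `v p` is picked one step later.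
Finally `a = q` is impossible, since `v p > v q`. -/

section Pick

variable {n : ℕ} {v : Fin n → ℝ} {t : ℝ}

theorem pick_eq_of_le_of_forall_lt {j : Fin n} (hj : t ≤ v j) (hlt : ∀ k < j, v k < t) :
    pick v t = v j := by
  have hne : (Finset.univ.filter (fun i => t ≤ v i)).Nonempty := ⟨j, by simpa using hj⟩
  rw [pick, dif_pos hne]
  refine congrArg v (le_antisymm (Finset.min'_le _ _ (by simpa using hj)) ?_)
  refine Finset.le_min' _ _ _ fun k hk => not_lt.1 fun hkj => ?_
  exact (hlt k hkj).not_ge (by simpa using hk)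

theorem pick_eq_zero_of_forall_lt (h : ∀ k, v k < t) : pick v t = 0 := by
  rw [pick, dif_neg]
  simpa [Finset.filter_nonempty_iff] using h

theorem pick_comp_perm_eq {σ : Equiv.Perm (Fin n)} {a : Fin n} (ha : t ≤ v a)
    (hlt : ∀ k < a, v k < t) (hσa : σ a = a) (hσ : ∀ k < a, σ k < a) :
    pick (v ∘ σ) t = v a := by
  rw [pick_eq_of_le_of_forall_lt (v := v ∘ σ) (j := a) (by simpa [hσa] using ha)
    fun k hk => hlt _ (hσ k hk)]
  simp [hσa]

theorem pick_comp_swap_eq_of_lt_left {p q a : Fin n} (ha : t ≤ v a) (hlt : ∀ k < a, v k < t)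
    (hpq : p < q) (hap : a < p) :
    pick (v ∘ Equiv.swap p q) t = v a := by
  have hfix : ∀ k ≤ a, Equiv.swap p q k = k := fun k hk =>
    Equiv.swap_apply_of_ne_of_ne (hk.trans_lt hap).ne (hk.trans_lt (hap.trans hpq)).ne
  refine pick_comp_perm_eq ha hlt (hfix a le_rfl) fun k hk => ?_
  rwa [hfix k hk.le]

theorem pick_comp_swap_eq_of_right_lt {p q a : Fin n} (ha : t ≤ v a) (hlt : ∀ k < a, v k < t)
    (hpa : p < a) (hqa : q < a) :
    pick (v ∘ Equiv.swap p q) t = v a := by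
  refine pick_comp_perm_eq ha hlt (Equiv.swap_apply_of_ne_of_ne hpa.ne' hqa.ne') fun k hk => ?_
  rcases eq_or_ne k p with rfl | hkp
  · simpa using hqa
  rcases eq_or_ne k q with rfl | hkq
  · simpa using hpa
  rwa [Equiv.swap_apply_of_ne_of_ne hkp hkq]

theorem pick_comp_swap_le_of_eq_left {q a : Fin n} (ha : t ≤ v a) (hlt : ∀ k < a, v k < t)
    (hpq : (q : ℕ) = a + 1) (hinv : v q < v a) :
    pick (v ∘ Equiv.swap a q) t ≤ v a := by
  have haq : a < q := Fin.lt_def.2 (by omega)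
  by_cases hq : t ≤ v q
  · refine (pick_eq_of_le_of_forall_lt (v := v ∘ Equiv.swap a q) (j := a) (by simpa using hq)
      fun k hk => ?_).trans_le (by simpa using hinv.le)
    rw [Function.comp_apply, Equiv.swap_apply_of_ne_of_ne hk.ne (hk.trans haq).ne]
    exact hlt k hk
  · refine (pick_eq_of_le_of_forall_lt (v := v ∘ Equiv.swap a q) (j := q) (by simpa using ha)
      fun k hk => ?_).trans_le (by simp)
    rcases (Fin.le_def.2 (by rw [Fin.lt_def] at hk; omega) : k ≤ a).lt_or_eq with hka | rfl
    · rw [Function.comp_apply, Equiv.swap_apply_of_ne_of_ne hka.ne (hka.trans haq).ne]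
      exact hlt k hka
    · simpa using hq

theorem pick_comp_swap_le {p q : Fin n} (hpq : (q : ℕ) = p + 1) (hinv : v q < v p) :
    pick (v ∘ Equiv.swap p q) t ≤ pick v t := by
  by_cases h : ∃ j, t ≤ v j
  swap
  · simp only [not_exists, not_le] at h
    rw [pick_eq_zero_of_forall_lt h, pick_eq_zero_of_forall_lt (v := v ∘ _) fun k => h _]
  obtain ⟨a, ha, hmin⟩ := wellFounded_lt.has_min {j | t ≤ v j} h
  have hlt : ∀ k < a, v k < t := fun k hk => not_le.1 fun hk' => hmin k hk' hk
  rw [pick_eq_of_le_of_forall_lt ha hlt]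
  have hpq' : p < q := Fin.lt_def.2 (by omega)
  rcases lt_trichotomy a p with hap | rfl | hpa
  · exact (pick_comp_swap_eq_of_lt_left ha hlt hpq' hap).le
  · exact pick_comp_swap_le_of_eq_left ha hlt hpq hinv
  · have hqa : q < a := by
      refine lt_of_le_of_ne (Fin.le_def.2 (by rw [Fin.lt_def] at hpa; omega)) fun hqa => ?_
      subst hqa
      exact (hlt p hpa).not_ge (ha.trans hinv.le)
    exact (pick_comp_swap_eq_of_right_lt ha hlt hpa hqa).le

end Pick

/-- Swapping an adjacent inverted pair never increases the value selected by the
threshold rule. -/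
theorem stmt19 {n : ℕ} (v : Fin n → ℝ)
    (i : ℕ) (hi : i + 1 < n)
    (hinv : v ⟨i + 1, hi⟩ < v ⟨i, by omega⟩)
    (t : ℝ) :
    pick (v ∘ Equiv.swap (⟨i, by omega⟩ : Fin n) ⟨i + 1, hi⟩) t ≤ pick v t :=
  pick_comp_swap_le rfl hinv
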